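/- In TL̂_3(q), for every integer h ≥ 1 there exist c_0,…,c_h in the image of F and a K-linear combination M of Markov elements such that g_{σ_2}·(g_{σ_1}·F(t_{a_2}))^h·g_{σ_2} = Σ_{j=0}^{h} c_j·Y^j + M. -/

import Mathlib

open FreeAlgebra

/-- `V(x,y) = x y x + x y + y x + x + y + 1`. -/
def Vel {R : Type*} [Ring R] (x y : R) : R :=
  x * y * x + x * y + y * x + x + y + 1

/-- Defining relations of the affine Temperley–Lieb algebra `TL̂_{n+1}(q)` of type `Ã_n`.
Generators are indexed by `Fin (n+1)`: for `i < n` the index `i` stands for `g_{σ_{i+1}}`,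
and the index `n` (i.e. `Fin.last n`) stands for `g_{a_{n+1}}`.  For `n = 1` only the
quadratic relations remain, so `TLhat K q 1` is `TL̂_2(q)` (with generators
`t_{σ_1} = g 0` and `t_{a_2} = g 1`). -/
inductive ATLRel (K : Type*) [CommRing K] (q : K) (n : ℕ) :
    FreeAlgebra K (Fin (n + 1)) → FreeAlgebra K (Fin (n + 1)) → Prop
  | quad (i : Fin (n + 1)) :
      ATLRel K q n (ι K i * ι K i) ((q - 1) • ι K i + algebraMap K _ q)
  | comm_ss (i j : Fin (n + 1)) (hi : (i : ℕ) < n) (hj : (j : ℕ) < n)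
      (hd : 2 ≤ Nat.dist (i : ℕ) (j : ℕ)) :
      ATLRel K q n (ι K i * ι K j) (ι K j * ι K i)
  | comm_sa (hn : 2 ≤ n) (i : Fin (n + 1)) (h1 : 1 ≤ (i : ℕ)) (h2 : (i : ℕ) + 2 ≤ n) :
      ATLRel K q n (ι K i * ι K (Fin.last n)) (ι K (Fin.last n) * ι K i)
  | braid_ss (i j : Fin (n + 1)) (hj : (j : ℕ) < n) (hij : (j : ℕ) = (i : ℕ) + 1) :
      ATLRel K q n (ι K i * ι K j * ι K i) (ι K j * ι K i * ι K j)
  | braid_sa (hn : 2 ≤ n) (i : Fin (n + 1)) (h : (i : ℕ) = 0 ∨ (i : ℕ) + 1 = n) :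
      ATLRel K q n (ι K i * ι K (Fin.last n) * ι K i)
        (ι K (Fin.last n) * ι K i * ι K (Fin.last n))
  | v_ss (i j : Fin (n + 1)) (hj : (j : ℕ) < n) (hij : (j : ℕ) = (i : ℕ) + 1) :
      ATLRel K q n (Vel (ι K i) (ι K j)) 0
  | v_s1a (hn : 2 ≤ n) (i : Fin (n + 1)) (hi : (i : ℕ) = 0) :
      ATLRel K q n (Vel (ι K i) (ι K (Fin.last n))) 0
  | v_sna (hn : 2 ≤ n) (i : Fin (n + 1)) (hi : (i : ℕ) + 1 = n) :
      ATLRel K q n (Vel (ι K i) (ι K (Fin.last n))) 0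

/-- The affine Temperley–Lieb algebra `TL̂_{n+1}(q)`. -/
abbrev TLhat (K : Type*) [CommRing K] (q : K) (n : ℕ) :=
  RingQuot (ATLRel K q n)

/-- Defining relations of the type `A` Temperley–Lieb algebra `TL_n(q)` with `n`
generators `g_{σ_1}, …, g_{σ_n}`; index `i : Fin n` stands for `g_{σ_{i+1}}`. -/
inductive TLARel (K : Type*) [CommRing K] (q : K) (n : ℕ) :
    FreeAlgebra K (Fin n) → FreeAlgebra K (Fin n) → Prop
  | quad (i : Fin n) :
      TLARel K q n (ι K i * ι K i) ((q - 1) • ι K i + algebraMap K _ q)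
  | comm (i j : Fin n) (hd : 2 ≤ Nat.dist (i : ℕ) (j : ℕ)) :
      TLARel K q n (ι K i * ι K j) (ι K j * ι K i)
  | braid (i j : Fin n) (hij : (j : ℕ) = (i : ℕ) + 1) :
      TLARel K q n (ι K i * ι K j * ι K i) (ι K j * ι K i * ι K j)
  | vrel (i j : Fin n) (hij : (j : ℕ) = (i : ℕ) + 1) :
      TLARel K q n (Vel (ι K i) (ι K j)) 0

/-- The Temperley–Lieb algebra `TL_n(q)` of type `A` (abstract presentation). -/
abbrev TLA (K : Type*) [CommRing K] (q : K) (n : ℕ) :=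
  RingQuot (TLARel K q n)

variable (K : Type*) [CommRing K] (q : K) (n : ℕ)

/-- The generator `g_i` of `TL̂_{n+1}(q)`. -/
noncomputable def gg (i : Fin (n + 1)) : TLhat K q n :=
  RingQuot.mkAlgHom K (ATLRel K q n) (ι K i)

/-- The inverse `q⁻¹ (g_i - (q-1))` of the generator `g_i` of `TL̂_{n+1}(q)`. -/
noncomputable def ggInv [Invertible q] (i : Fin (n + 1)) : TLhat K q n :=
  ⅟q • (gg K q n i - algebraMap K _ (q - 1))

/-- The generator `g_{σ_{i+1}}` of `TL_n(q)`. -/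
noncomputable def ga (i : Fin n) : TLA K q n :=
  RingQuot.mkAlgHom K (TLARel K q n) (ι K i)

/-- The inverse `q⁻¹ (g - (q-1))` of a generator of `TL_n(q)`. -/
noncomputable def gaInv [Invertible q] (i : Fin n) : TLA K q n :=
  ⅟q • (ga K q n i - algebraMap K _ (q - 1))

/-- The index of `g_{σ_n}` in `TL̂_{n+1}(q)`. -/
def sigmaTop : Fin (n + 1) := ⟨n - 1, Nat.lt_succ_of_le (Nat.sub_le n 1)⟩

/-- The index of `g_{σ_{n-1}}` in `TL̂_{n+1}(q)`. -/
def sigmaSub : Fin (n + 1) := ⟨n - 2, Nat.lt_succ_of_le (Nat.sub_le n 2)⟩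

/-- `F` is the canonical homomorphism `F_n : TL̂_n(q) → TL̂_{n+1}(q)`, determined by
`t_{σ_i} ↦ g_{σ_i}` for `1 ≤ i ≤ n-1` and `t_{a_n} ↦ g_{σ_n} g_{a_{n+1}} g_{σ_n}⁻¹`. -/
def IsF [Invertible q] (F : TLhat K q (n - 1) →ₐ[K] TLhat K q n) : Prop :=
  (∀ i : Fin (n - 1 + 1), (i : ℕ) < n - 1 →
      F (gg K q (n - 1) i) =
        gg K q n (Fin.castLE (Nat.succ_le_succ (Nat.sub_le n 1)) i)) ∧
  F (gg K q (n - 1) (Fin.last (n - 1))) =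
    gg K q n (sigmaTop n) * gg K q n (Fin.last n) * ggInv K q n (sigmaTop n)

/-- Markov elements: `A g_{σ_n}^ε B` with `A, B` in the image of `F_n` and `ε ∈ {0,1}`. -/
def IsMarkov [Invertible q] (F : TLhat K q (n - 1) →ₐ[K] TLhat K q n)
    (x : TLhat K q n) : Prop :=
  ∃ A B : TLhat K q (n - 1), ∃ ε : ℕ, ε ≤ 1 ∧
    x = F A * gg K q n (sigmaTop n) ^ ε * F B

/-- A trace on a `K`-algebra `R`: a `K`-linear map with `τ(xy) = τ(yx)`. -/
def IsTrace {R : Type*} [Ring R] [Algebra K R] (τ : R →ₗ[K] K) : Prop :=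
  ∀ x y : R, τ (x * y) = τ (y * x)

/-- The Dynkin automorphism `ψ` of `TL̂_{n+1}(q)`: `g_i ↦ g_{i+1}` cyclically, i.e.
`g_{σ_1} ↦ g_{σ_2} ↦ ⋯ ↦ g_{σ_n} ↦ g_{a_{n+1}} ↦ g_{σ_1}`. -/
def IsDynkin (ψ : TLhat K q n ≃ₐ[K] TLhat K q n) : Prop :=
  ∀ i : Fin (n + 1), ψ (gg K q n i) = gg K q n (i + 1)

/-- `X = g_{σ_n} g_{σ_{n-1}} ⋯ g_{σ_1} g_{a_{n+1}}`. -/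
noncomputable def Xel : TLhat K q n :=
  (List.ofFn fun t : Fin n =>
      gg K q n ⟨n - 1 - (t : ℕ),
        Nat.lt_succ_of_le (le_trans (Nat.sub_le _ _) (Nat.sub_le _ _))⟩).prod *
    gg K q n (Fin.last n)

/-- `Z = g_{σ_{n-1}} g_{σ_{n-2}} ⋯ g_{σ_1} · F_n(t_{a_n})`. -/
noncomputable def Zel [Invertible q] (F : TLhat K q (n - 1) →ₐ[K] TLhat K q n) :
    TLhat K q n :=
  (List.ofFn fun t : Fin (n - 1) =>
      gg K q n ⟨n - 2 - (t : ℕ),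
        Nat.lt_succ_of_le (le_trans (Nat.sub_le _ _) (Nat.sub_le _ _))⟩).prod *
    F (gg K q (n - 1) (Fin.last (n - 1)))

/-- `g_{σ_n} g_{σ_{n-1}} ⋯ g_{σ_i}`, with the convention that it is `1` when `i = n + 1`. -/
noncomputable def tailChain (i : ℕ) : TLhat K q n :=
  (List.ofFn fun t : Fin (n + 1 - i) =>
      gg K q n ⟨n - 1 - (t : ℕ),
        Nat.lt_succ_of_le (le_trans (Nat.sub_le _ _) (Nat.sub_le _ _))⟩).prod

/-- `g_{σ_{i₀}} g_{σ_{i₀ - 1}} ⋯ g_{σ_1}`, with the convention that it is `1` when `i₀ = 0`. -/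
noncomputable def headChain (i₀ : ℕ) (h : i₀ ≤ n) : TLhat K q n :=
  (List.ofFn fun t : Fin i₀ =>
      gg K q n ⟨i₀ - 1 - (t : ℕ),
        Nat.lt_succ_of_le (le_trans (le_trans (Nat.sub_le _ _) (Nat.sub_le _ _)) h)⟩).prod

/-- `TL_n(q)` realized as the subalgebra of `TL̂_{n+1}(q)` generated by `g_{σ_1}, …, g_{σ_n}`. -/
noncomputable def TLsub : Subalgebra K (TLhat K q n) :=
  Algebra.adjoin K (Set.range fun i : Fin n => gg K q n (Fin.castSucc i))

/-- The generator `g_{σ_{i+1}}` as an element of the subalgebra `TL_n(q)`. -/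
noncomputable def sgen (i : Fin n) : TLsub K q n :=
  ⟨gg K q n (Fin.castSucc i), Algebra.subset_adjoin (Set.mem_range_self i)⟩

/-- The inverse `q⁻¹ (g - (q-1))` of `sgen` inside `TL_n(q)`. -/
noncomputable def sgenInv [Invertible q] (i : Fin n) : TLsub K q n :=
  ⅟q • (sgen K q n i - algebraMap K _ (q - 1))

/-- `g_{σ_1} ⋯ g_{σ_{n-1}} g_{σ_n} g_{σ_{n-1}}⁻¹ ⋯ g_{σ_1}⁻¹` in `TL̂_{n+1}(q)`. -/
noncomputable def EnTarget [Invertible q] : TLhat K q n :=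
  (List.ofFn fun t : Fin (n - 1) =>
      gg K q n (Fin.castLE (le_trans (Nat.sub_le n 1) (Nat.le_succ n)) t)).prod *
    gg K q n (sigmaTop n) *
    (List.ofFn fun t : Fin (n - 1) =>
      ggInv K q n ⟨n - 2 - (t : ℕ),
        Nat.lt_succ_of_le (le_trans (Nat.sub_le _ _) (Nat.sub_le _ _))⟩).prod

/-- `E` is the canonical homomorphism `E_n : TL̂_{n+1}(q) → TL_n(q)`, determined by
`g_{σ_i} ↦ g_{σ_i}` for `1 ≤ i ≤ n` and
`g_{a_{n+1}} ↦ g_{σ_1} ⋯ g_{σ_{n-1}} g_{σ_n} g_{σ_{n-1}}⁻¹ ⋯ g_{σ_1}⁻¹`. -/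
def IsE [Invertible q] (E : TLhat K q n →ₐ[K] TLsub K q n) : Prop :=
  (∀ i : Fin n,
    (E (gg K q n (Fin.castSucc i)) : TLhat K q n) = gg K q n (Fin.castSucc i)) ∧
  (E (gg K q n (Fin.last n)) : TLhat K q n) = EnTarget K q n

/-!
Let `A = F(TL̂₂(q))`, `τ = F(t_{a₂})` and `R = g_{σ₁} τ ∈ A`. The braid relations give
`Y g_{σ₁} = τ Y` and `Y τ = g_{σ₁} Y`, so `Y A = A Y`; the relations `V = 0` give
`Y g_{σ₂} = 1 + g_{σ₁} + g_{σ₂} + g_{σ₁} g_{σ₂} - Y - q g_{σ₁} Y - q g_{σ₂} R`.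
Hence for `W_d = Σ_{j ≤ d} A Y^j + span(Markov)` we get `A W_d ⊆ W_d` and `Y W_d ⊆ W_{d+1}`.
Since `q g_{σ₂} R = g_{σ₁} Y g_{σ₂} - (q - 1) g_{σ₁} Y`,
`q g_{σ₂} R^{h+1} g_{σ₂} = g_{σ₁} Y (g_{σ₂} R^h g_{σ₂}) - (q - 1) g_{σ₁} Y (R^h g_{σ₂})`,
and induction on `h`, starting from `g_{σ₂}² ∈ span(Markov)`, puts `g_{σ₂} R^h g_{σ₂}` in `W_h`.
-/

section Generators

variable {K q n}

theorem gg_mul_self (i : Fin (n + 1)) :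
    gg K q n i * gg K q n i = (q - 1) • gg K q n i + algebraMap K _ q := by
  simpa [gg] using RingQuot.mkAlgHom_rel K (ATLRel.quad (K := K) (q := q) (n := n) i)

theorem exists_mem_range_mul_eq_mul_map {A : Type*} [Ring A] [Algebra K A]
    (F : TLhat K q n →ₐ[K] A) (y : A)
    (hgen : ∀ i, ∃ b ∈ F.range, y * F (gg K q n i) = b * y) (x : TLhat K q n) :
    ∃ b ∈ F.range, y * F x = b * y := by
  obtain ⟨x, rfl⟩ := RingQuot.mkAlgHom_surjective K (ATLRel K q n) x
  induction x using FreeAlgebra.induction with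
  | grade0 r =>
    exact ⟨algebraMap K A r, F.range.algebraMap_mem r, by simp [Algebra.commutes]⟩
  | grade1 i => exact hgen i
  | mul x x' hx hx' =>
    obtain ⟨b, hb, hxb⟩ := hx
    obtain ⟨b', hb', hxb'⟩ := hx'
    refine ⟨b * b', mul_mem hb hb', ?_⟩
    rw [map_mul, map_mul, ← mul_assoc, hxb, mul_assoc, hxb', mul_assoc]
  | add x x' hx hx' =>
    obtain ⟨b, hb, hxb⟩ := hx
    obtain ⟨b', hb', hxb'⟩ := hx'
    exact ⟨b + b', add_mem hb hb', by rw [map_add, map_add, mul_add, hxb, hxb', add_mul]⟩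

variable [Invertible q]

theorem smul_ggInv (i : Fin (n + 1)) :
    q • ggInv K q n i = gg K q n i - algebraMap K _ (q - 1) := by
  rw [ggInv, smul_smul, mul_invOf_self, one_smul]

theorem ggInv_mul_gg (i : Fin (n + 1)) : ggInv K q n i * gg K q n i = 1 := by
  rw [ggInv, smul_mul_assoc, sub_mul, gg_mul_self, ← Algebra.smul_def, add_sub_cancel_left,
    Algebra.algebraMap_eq_smul_one, smul_smul, invOf_mul_self, one_smul]

theorem gg_mul_ggInv (i : Fin (n + 1)) : gg K q n i * ggInv K q n i = 1 := by
  rw [ggInv, mul_smul_comm, mul_sub, gg_mul_self, ← Algebra.commutes, ← Algebra.smul_def,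
    add_sub_cancel_left, Algebra.algebraMap_eq_smul_one, smul_smul, invOf_mul_self, one_smul]

end Generators

section Markov

variable {K q n} [Invertible q] {F : TLhat K q (n - 1) →ₐ[K] TLhat K q n}

variable (F) in
def markovSpan : Submodule K (TLhat K q n) :=
  Submodule.span K {x | IsMarkov K q n F x}

theorem mem_markovSpan_of_mem_range {b : TLhat K q n} (hb : b ∈ F.range) :
    b ∈ markovSpan F := by
  obtain ⟨B, rfl⟩ := hb
  exact Submodule.subset_span ⟨B, 1, 0, zero_le_one, by simp⟩

theorem mul_sigmaTop_mul_mem_markovSpan {a b : TLhat K q n} (ha : a ∈ F.range)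
    (hb : b ∈ F.range) : a * gg K q n (sigmaTop n) * b ∈ markovSpan F := by
  obtain ⟨A, rfl⟩ := ha
  obtain ⟨B, rfl⟩ := hb
  exact Submodule.subset_span ⟨A, B, 1, le_rfl, by rw [pow_one]; rfl⟩

theorem mul_mem_markovSpan {a x : TLhat K q n} (ha : a ∈ F.range) (hx : x ∈ markovSpan F) :
    a * x ∈ markovSpan F := by
  obtain ⟨A, rfl⟩ := ha
  refine (Submodule.span_le (p := (markovSpan F).comap (LinearMap.mulLeft K (F A)))).mpr
    ?_ hx
  rintro _ ⟨A', B, ε, hε, rfl⟩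
  exact Submodule.subset_span ⟨A * A', B, ε, hε, by simp [mul_assoc]⟩

end Markov

section ThreeStrands

variable {K q}

local notation "σ₁" => gg K q 2 0
local notation "σ₂" => gg K q 2 1
local notation "α₃" => gg K q 2 2
local notation "Y" => gg K q 2 1 * gg K q 2 0 * gg K q 2 2

theorem sigma1_sigma2_braid : σ₁ * σ₂ * σ₁ = σ₂ * σ₁ * σ₂ := by
  simpa [gg] using RingQuot.mkAlgHom_rel K
    (ATLRel.braid_ss (K := K) (q := q) (n := 2) 0 1 (by norm_num) (by norm_num))

theorem sigma1_alpha3_braid : σ₁ * α₃ * σ₁ = α₃ * σ₁ * α₃ := by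
  simpa [gg] using RingQuot.mkAlgHom_rel K
    (ATLRel.braid_sa (K := K) (q := q) (n := 2) le_rfl 0 (Or.inl rfl))

theorem sigma2_alpha3_braid : σ₂ * α₃ * σ₂ = α₃ * σ₂ * α₃ := by
  simpa [gg] using RingQuot.mkAlgHom_rel K
    (ATLRel.braid_sa (K := K) (q := q) (n := 2) le_rfl 1 (Or.inr rfl))

theorem vel_sigma1_sigma2 : Vel σ₁ σ₂ = 0 := by
  simpa [Vel, gg] using RingQuot.mkAlgHom_rel K
    (ATLRel.v_ss (K := K) (q := q) (n := 2) 0 1 (by norm_num) (by norm_num))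

theorem vel_sigma2_alpha3 : Vel σ₂ α₃ = 0 := by
  simpa [Vel, gg] using RingQuot.mkAlgHom_rel K
    (ATLRel.v_sna (K := K) (q := q) (n := 2) le_rfl 1 rfl)

theorem one_add_sigma1_mul_eq_zero : (1 + σ₁) * (Y * σ₂ + Y - 1 - σ₂) = 0 := by
  have hcert : (1 + σ₁) * (Y * σ₂ + Y - 1 - σ₂) =
      σ₂ * σ₁ * Vel σ₂ α₃ + (σ₁ * σ₂ * σ₁ - σ₂ * σ₁ * σ₂) * (α₃ * σ₂ + α₃ + 1) -
        Vel σ₁ σ₂ := by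
    simp only [Vel, mul_add, add_mul, mul_sub, sub_mul, mul_assoc, mul_one, one_mul]
    abel
  rw [hcert, vel_sigma2_alpha3, vel_sigma1_sigma2, sigma1_sigma2_braid, sub_self]
  simp

variable [Invertible q] {F : TLhat K q 1 →ₐ[K] TLhat K q 2}

local notation "τ" => F (gg K q 1 1)

theorem IsF.map_gg_zero (hF : IsF K q 2 F) : F (gg K q 1 0) = σ₁ :=
  hF.1 0 zero_lt_one

theorem IsF.map_gg_one (hF : IsF K q 2 F) : τ = σ₂ * α₃ * ggInv K q 2 1 :=
  hF.2

theorem Y_mul_sigma1 (hF : IsF K q 2 F) : Y * σ₁ = τ * Y := by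
  calc Y * σ₁ = σ₂ * (σ₁ * α₃ * σ₁) := by noncomm_ring
    _ = σ₂ * α₃ * (ggInv K q 2 1 * σ₂) * σ₁ * α₃ := by
      rw [sigma1_alpha3_braid, ggInv_mul_gg]; noncomm_ring
    _ = τ * Y := by rw [hF.map_gg_one]; noncomm_ring

theorem Y_mul_map_gg_one (hF : IsF K q 2 F) : Y * τ = σ₁ * Y := by
  calc Y * τ = σ₂ * σ₁ * (σ₂ * α₃ * σ₂) * ggInv K q 2 1 := by
        rw [hF.map_gg_one, sigma2_alpha3_braid]; noncomm_ring
    _ = σ₂ * σ₁ * σ₂ * α₃ * (σ₂ * ggInv K q 2 1) := by noncomm_ring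
    _ = σ₁ * Y := by rw [← sigma1_sigma2_braid, gg_mul_ggInv]; noncomm_ring

theorem exists_Y_mul_eq (hF : IsF K q 2 F) {b : TLhat K q 2} (hb : b ∈ F.range) :
    ∃ b' ∈ F.range, Y * b = b' * Y := by
  obtain ⟨x, rfl⟩ := hb
  refine exists_mem_range_mul_eq_mul_map F _ (fun i => ?_) x
  fin_cases i
  · exact ⟨τ, ⟨_, rfl⟩, by simpa [hF.map_gg_zero] using Y_mul_sigma1 hF⟩
  · exact ⟨σ₁, ⟨_, hF.map_gg_zero⟩, Y_mul_map_gg_one hF⟩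

theorem sigma1_mul_Y_mul_sigma2 (hF : IsF K q 2 F) :
    σ₁ * Y * σ₂ = q • (σ₂ * (σ₁ * τ)) + (q - 1) • (σ₁ * Y) := by
  have h : σ₂ * (σ₁ * τ) = σ₁ * σ₂ * σ₁ * α₃ * ggInv K q 2 1 := by
    rw [hF.map_gg_one, sigma1_sigma2_braid]; noncomm_ring
  rw [h, ← mul_smul_comm, smul_ggInv, mul_sub, ← Algebra.commutes, ← Algebra.smul_def]
  noncomm_ring

theorem Y_mul_sigma2 (hF : IsF K q 2 F) :
    Y * σ₂ = 1 + σ₁ + σ₂ + σ₁ * σ₂ - Y - q • (σ₁ * Y) - q • (σ₂ * (σ₁ * τ)) := by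
  have h := one_add_sigma1_mul_eq_zero (K := K) (q := q)
  have e : (1 + σ₁) * (Y * σ₂ + Y - 1 - σ₂) =
      Y * σ₂ + Y - 1 - σ₂ + σ₁ * Y * σ₂ + σ₁ * Y - σ₁ - σ₁ * σ₂ := by
    simp only [mul_add, add_mul, mul_sub, mul_assoc, mul_one, one_mul]
    abel
  rw [e, sigma1_mul_Y_mul_sigma2 hF] at h
  rw [← sub_eq_zero, ← h]
  module

variable (F) in
def yFiltration (d : ℕ) : Submodule K (TLhat K q 2) :=
  Submodule.span K ({x | ∃ c ∈ F.range, ∃ j ≤ d, x = c * Y ^ j} ∪ {x | IsMarkov K q 2 F x})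

theorem yFiltration_mono {d e : ℕ} (hde : d ≤ e) : yFiltration F d ≤ yFiltration F e :=
  Submodule.span_mono <| Set.union_subset_union_left _
    fun _ ⟨c, hc, j, hj, hx⟩ => ⟨c, hc, j, hj.trans hde, hx⟩

theorem markovSpan_le_yFiltration (d : ℕ) : markovSpan F ≤ yFiltration F d :=
  Submodule.span_mono Set.subset_union_right

theorem mul_Y_pow_mem_yFiltration {c : TLhat K q 2} (hc : c ∈ F.range) {j d : ℕ} (hj : j ≤ d) :
    c * Y ^ j ∈ yFiltration F d :=
  Submodule.subset_span (Or.inl ⟨c, hc, j, hj, rfl⟩)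

theorem mul_mem_yFiltration {a x : TLhat K q 2} {d : ℕ} (ha : a ∈ F.range)
    (hx : x ∈ yFiltration F d) : a * x ∈ yFiltration F d := by
  refine (Submodule.span_le (p := (yFiltration F d).comap (LinearMap.mulLeft K a))).mpr ?_ hx
  rintro _ (⟨c, hc, j, hj, rfl⟩ | hM)
  · simpa [mul_assoc] using mul_Y_pow_mem_yFiltration (mul_mem ha hc) hj
  · exact markovSpan_le_yFiltration d (mul_mem_markovSpan ha (Submodule.subset_span hM))

theorem Y_mul_sigma2_mul_mem_yFiltration (hF : IsF K q 2 F) {b : TLhat K q 2}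
    (hb : b ∈ F.range) : Y * σ₂ * b ∈ yFiltration F 1 := by
  have hσ₁ : σ₁ ∈ F.range := ⟨_, hF.map_gg_zero⟩
  have hτ : τ ∈ F.range := ⟨_, rfl⟩
  have hA {a : TLhat K q 2} (ha : a ∈ F.range) : a ∈ yFiltration F 1 :=
    markovSpan_le_yFiltration 1 (mem_markovSpan_of_mem_range ha)
  have hM {a c : TLhat K q 2} (ha : a ∈ F.range) (hc : c ∈ F.range) :
      a * σ₂ * c ∈ yFiltration F 1 :=
    markovSpan_le_yFiltration 1 (mul_sigmaTop_mul_mem_markovSpan ha hc)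
  obtain ⟨b', hb', hYb⟩ := exists_Y_mul_eq hF hb
  have hσ₁Yb : σ₁ * Y * b = σ₁ * b' * Y := by rw [mul_assoc, hYb, ← mul_assoc]
  rw [Y_mul_sigma2 hF]
  simp only [sub_mul, add_mul, smul_mul_assoc, one_mul, hYb, hσ₁Yb]
  refine sub_mem (sub_mem (sub_mem (add_mem (add_mem (add_mem (hA hb) (hA (mul_mem hσ₁ hb)))
    ?_) (hM hσ₁ hb)) ?_) (Submodule.smul_mem _ _ ?_)) (Submodule.smul_mem _ _ ?_)
  · simpa using hM (one_mem _) hb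
  · simpa using mul_Y_pow_mem_yFiltration hb' (j := 1) le_rfl
  · simpa using mul_Y_pow_mem_yFiltration (mul_mem hσ₁ hb') (j := 1) le_rfl
  · simpa [mul_assoc] using hM (one_mem _) (mul_mem (mul_mem hσ₁ hτ) hb)

theorem Y_mul_mem_yFiltration (hF : IsF K q 2 F) {x : TLhat K q 2} {d : ℕ}
    (hx : x ∈ yFiltration F d) : Y * x ∈ yFiltration F (d + 1) := by
  refine (Submodule.span_le
    (p := (yFiltration F (d + 1)).comap (LinearMap.mulLeft K Y))).mpr ?_ hx
  rintro _ (⟨c, hc, j, hj, rfl⟩ | ⟨A, B, ε, hε, rfl⟩)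
  · obtain ⟨c', hc', hYc⟩ := exists_Y_mul_eq hF hc
    rw [SetLike.mem_coe, Submodule.mem_comap, LinearMap.mulLeft_apply, ← mul_assoc, hYc,
      mul_assoc, ← pow_succ']
    exact mul_Y_pow_mem_yFiltration hc' (by omega)
  · obtain ⟨a, ha, hYA⟩ := exists_Y_mul_eq hF (b := F A) ⟨A, rfl⟩
    rw [SetLike.mem_coe, Submodule.mem_comap, LinearMap.mulLeft_apply]
    rcases Nat.le_one_iff_eq_zero_or_eq_one.mp hε with rfl | rfl
    · obtain ⟨b, hb, hYB⟩ := exists_Y_mul_eq hF (b := F B) ⟨B, rfl⟩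
      rw [pow_zero, mul_one, ← mul_assoc, hYA, mul_assoc, hYB, ← mul_assoc]
      simpa using mul_Y_pow_mem_yFiltration (mul_mem ha hb) (j := 1) (by omega)
    · rw [pow_one, ← mul_assoc, ← mul_assoc, hYA, mul_assoc a, mul_assoc a]
      exact yFiltration_mono (by omega)
        (mul_mem_yFiltration ha (Y_mul_sigma2_mul_mem_yFiltration hF ⟨B, rfl⟩))

theorem exists_sum_add_of_mem_yFiltration {x : TLhat K q 2} {d : ℕ}
    (hx : x ∈ yFiltration F d) :
    ∃ c : ℕ → TLhat K q 2, (∀ j, c j ∈ F.range) ∧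
      ∃ M ∈ markovSpan F, x = (∑ j ∈ Finset.range (d + 1), c j * Y ^ j) + M := by
  induction hx using Submodule.span_induction with
  | mem x hx =>
    rcases hx with ⟨c, hc, j, hj, rfl⟩ | hM
    · refine ⟨fun i => if i = j then c else 0, fun i => ?_, 0, zero_mem _, ?_⟩
      · dsimp only
        split_ifs
        exacts [hc, zero_mem _]
      · simp [ite_mul, Finset.sum_ite_eq', Nat.lt_succ_of_le hj]
    · exact ⟨0, fun _ => zero_mem _, x, Submodule.subset_span hM, by simp⟩
  | zero => exact ⟨0, fun _ => zero_mem _, 0, zero_mem _, by simp⟩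
  | add x y _ _ hx hy =>
    obtain ⟨c, hc, M, hM, rfl⟩ := hx
    obtain ⟨c', hc', M', hM', rfl⟩ := hy
    refine ⟨c + c', fun j => add_mem (hc j) (hc' j), M + M', add_mem hM hM', ?_⟩
    simp only [Pi.add_apply, add_mul, Finset.sum_add_distrib]
    abel
  | smul r x _ hx =>
    obtain ⟨c, hc, M, hM, rfl⟩ := hx
    refine ⟨r • c, fun j => Subalgebra.smul_mem _ (hc j) r, r • M, Submodule.smul_mem _ r hM, ?_⟩
    simp only [Pi.smul_apply, smul_mul_assoc, smul_add, Finset.smul_sum]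

theorem sigma2_mul_pow_mul_sigma2_mem_yFiltration (hF : IsF K q 2 F) (h : ℕ) :
    σ₂ * (σ₁ * τ) ^ h * σ₂ ∈ yFiltration F h := by
  have hσ₁ : σ₁ ∈ F.range := ⟨_, hF.map_gg_zero⟩
  have hR : σ₁ * τ ∈ F.range := mul_mem hσ₁ ⟨_, rfl⟩
  induction h with
  | zero =>
    rw [pow_zero, mul_one, gg_mul_self]
    refine markovSpan_le_yFiltration 0 (add_mem (Submodule.smul_mem _ _ ?_)
      (mem_markovSpan_of_mem_range (F.range.algebraMap_mem q)))
    have h1 := mul_sigmaTop_mul_mem_markovSpan (n := 2) (F := F) (one_mem _) (one_mem _)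
    rwa [one_mul, mul_one] at h1
  | succ h ih =>
    have hσ₂R : q • (σ₂ * (σ₁ * τ)) = σ₁ * Y * σ₂ - (q - 1) • (σ₁ * Y) :=
      eq_sub_of_add_eq (sigma1_mul_Y_mul_sigma2 hF).symm
    have hstep : q • (σ₂ * (σ₁ * τ) ^ (h + 1) * σ₂) =
        σ₁ * (Y * (σ₂ * (σ₁ * τ) ^ h * σ₂)) -
          (q - 1) • (σ₁ * (Y * ((σ₁ * τ) ^ h * σ₂ * 1))) := by
      calc q • (σ₂ * (σ₁ * τ) ^ (h + 1) * σ₂) = q • (σ₂ * (σ₁ * τ)) * ((σ₁ * τ) ^ h * σ₂) := by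
            rw [pow_succ', smul_mul_assoc]; simp only [mul_assoc]
        _ = _ := by rw [hσ₂R]; simp only [sub_mul, smul_mul_assoc, mul_assoc, mul_one]
    have hRσ₂ : (σ₁ * τ) ^ h * σ₂ * 1 ∈ yFiltration F h :=
      yFiltration_mono (Nat.zero_le h) (markovSpan_le_yFiltration 0
        (mul_sigmaTop_mul_mem_markovSpan (pow_mem hR h) (one_mem _)))
    have hq : q • (σ₂ * (σ₁ * τ) ^ (h + 1) * σ₂) ∈ yFiltration F (h + 1) := by
      rw [hstep]
      exact sub_mem (mul_mem_yFiltration hσ₁ (Y_mul_mem_yFiltration hF ih))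
        (Submodule.smul_mem _ _ (mul_mem_yFiltration hσ₁ (Y_mul_mem_yFiltration hF hRσ₂)))
    simpa [smul_smul] using Submodule.smul_mem _ (⅟q) hq

end ThreeStrands

theorem corollary_5_1_6_general
    (K : Type*) [CommRing K]
    (q : K) [Invertible q]
    (F : TLhat K q 1 →ₐ[K] TLhat K q 2) (hF : IsF K q 2 F)
    (h : ℕ) :
    ∃ c : ℕ → TLhat K q 2, (∀ j, c j ∈ F.range) ∧
      ∃ M ∈ Submodule.span K {x : TLhat K q 2 | IsMarkov K q 2 F x},
        gg K q 2 1 * (gg K q 2 0 * F (gg K q 1 1)) ^ h * gg K q 2 1 =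
          (∑ j ∈ Finset.range (h + 1),
            c j * (gg K q 2 1 * gg K q 2 0 * gg K q 2 2) ^ j) + M :=
  exists_sum_add_of_mem_yFiltration (sigma2_mul_pow_mul_sigma2_mem_yFiltration hF h)

/-- Corollary 5.1.6: in `TL̂_3(q)`, for every `h ≥ 1`,
`g_{σ_2} (g_{σ_1} F(t_{a_2}))^h g_{σ_2} = Σ_{j=0}^{h} c_j Y^j + M` with the `c_j` in
the image of `F`, `Y = g_{σ_2} g_{σ_1} g_{a_3}` and `M` a `K`-linear combination of
Markov elements. -/
theorem corollary_5_1_6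
    (K : Type*) [CommRing K] [IsDomain K] [CharZero K]
    (q sq : K) [Invertible q] [Invertible (q + 1)] (hsq : sq * sq = q)
    (F : TLhat K q 1 →ₐ[K] TLhat K q 2) (hF : IsF K q 2 F)
    (h : ℕ) (hh : 1 ≤ h) :
    ∃ c : ℕ → TLhat K q 2, (∀ j, c j ∈ F.range) ∧
      ∃ M ∈ Submodule.span K {x : TLhat K q 2 | IsMarkov K q 2 F x},
        gg K q 2 1 * (gg K q 2 0 * F (gg K q 1 1)) ^ h * gg K q 2 1 =
          (∑ j ∈ Finset.range (h + 1),
            c j * (gg K q 2 1 * gg K q 2 0 * gg K q 2 2) ^ j) + M :=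
  corollary_5_1_6_general K q F hF h
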